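/- arXiv:1606.04459 — 2 statements merged into one kernel-verified Lean document; each statement's English description precedes it below -/
import Mathlib

section
/- If a set of prototiles has the property that every tile set either admits no tiling of the plane or admits a periodic tiling, then the Tiling Problem for such sets is decidable: enumerate configurations covering larger and larger disks until either no configuration extends (answer No) or a fundamental domain is found (answer Yes). Equivalently: if the Tiling Problem is undecidable, then there exists an aperiodic set of tiles, i.e., a set that admits a tiling but admits no periodic tiling. -/
/-- A Wang tile: edge colors (north, south, east, west), colors coded by naturals. -/
abbrev WangTile : Type := ℕ × ℕ × ℕ × ℕ

def WangTile.north (t : WangTile) : ℕ := t.1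
def WangTile.south (t : WangTile) : ℕ := t.2.1
def WangTile.east (t : WangTile) : ℕ := t.2.2.1
def WangTile.west (t : WangTile) : ℕ := t.2.2.2

/-- `f : ℤ² → WangTile` is a valid tiling of the plane by the tile set `T`:
every tile used lies in `T` and adjacent edge colors match. -/
def IsWangTiling (T : Finset WangTile) (f : ℤ × ℤ → WangTile) : Prop :=
  (∀ x, f x ∈ T) ∧
  (∀ x y : ℤ, (f (x, y)).east = (f (x + 1, y)).west) ∧
  (∀ x y : ℤ, (f (x, y)).north = (f (x, y + 1)).south)

/-- The tile set `T` admits a tiling of the plane. -/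
def WangTiles (T : Finset WangTile) : Prop := ∃ f, IsWangTiling T f

/-- The tile set `T` admits a periodic tiling: one invariant under a nonzero
translation. -/
def WangTilesPeriodically (T : Finset WangTile) : Prop :=
  ∃ f, IsWangTiling T f ∧ ∃ v : ℤ × ℤ, v ≠ 0 ∧ ∀ x, f (x + v) = f x

/-!
A tile set tiles the plane iff it tiles every finite square (compactness of the space of
configurations), so non-tiling is semi-decided by finding a size `n` for which none of the
finitely many `n × n` arrays of tiles is edge-consistent.

A periodic tiling can be made doubly periodic: if `(a, b)` with `b > 0` is a period, the tiling is
determined by the sequence of columns of the strip `ℤ × [0, b)`, a sequence over a finite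
alphabet; pigeonholing its long windows lets us replace it by a periodic sequence with the same
windows, which yields a tiling with an additional horizontal period. A doubly periodic tiling is
an edge-consistent `n × n` torus, a finite certificate whose periodic extension tiles the plane.
So under the hypothesis tiling is semi-decided as well, and Post's theorem (a set that is r.e. and
co-r.e. is decidable) concludes.
-/

def periods {G β : Type*} [AddGroup G] (f : G → β) : AddSubgroup G where
  carrier := {v | ∀ x, f (x + v) = f x}
  zero_mem' x := by rw [add_zero]
  add_mem' {u v} hu hv x := by rw [← add_assoc, hv, hu]
  neg_mem' {u} hu x := by rw [← hu (x + -u), neg_add_cancel_right]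

def HasSquarePeriod {β : Type*} (f : ℤ × ℤ → β) (n : ℕ) : Prop :=
  ((n : ℤ), (0 : ℤ)) ∈ periods f ∧ ((0 : ℤ), (n : ℤ)) ∈ periods f

theorem HasSquarePeriod.apply_add_emod {β : Type*} {f : ℤ × ℤ → β} {n : ℕ}
    (hf : HasSquarePeriod f n) (x y d e : ℤ) :
    f (x + d, y + e) = f (x % n + d, y % n + e) := by
  have hmem : ((n : ℤ) * (x / n), (n : ℤ) * (y / n)) ∈ periods f := by
    convert add_mem (zsmul_mem hf.1 (x / n)) (zsmul_mem hf.2 (y / n)) using 1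
    ext <;> simp [mul_comm]
  rw [← hmem (x % n + d, y % n + e)]
  congr 1
  ext
  · simp only [Prod.fst_add]; linarith [Int.emod_add_mul_ediv x n]
  · simp only [Prod.snd_add]; linarith [Int.emod_add_mul_ediv y n]

theorem hasSquarePeriod_of_mem_periods {β : Type*} {f : ℤ × ℤ → β} {P b : ℕ} {a : ℤ}
    (hP : ((P : ℤ), (0 : ℤ)) ∈ periods f) (hab : (a, (b : ℤ)) ∈ periods f) :
    HasSquarePeriod f (P * b) := by
  constructor
  · convert zsmul_mem hP (b : ℤ) using 1
    ext <;> simp [mul_comm]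
  · convert sub_mem (zsmul_mem hab (P : ℤ)) (zsmul_mem hP a) using 1
    ext <;> simp [mul_comm]

/-- Pigeonhole two equal blocks of length `k + 1` and repeat the stretch between them. -/
theorem exists_periodic_reindex {α : Type*} [Finite α] (c : ℤ → α) (k : ℕ) :
    ∃ P : ℕ, 0 < P ∧ ∃ σ : ℤ → ℤ, Function.Periodic σ P ∧
      ∀ x, ∃ w, ∀ i : ℕ, i < k → c (σ (x + i)) = c (w + i) := by
  obtain ⟨t₁, t₂, hlt, heq⟩ := Set.Finite.exists_lt_map_eq_of_forall_mem
    (f := fun t : ℕ => fun i : Fin (k + 1) => c (t * (k + 1) + i)) (t := Set.univ)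
    (fun _ => trivial) Set.finite_univ
  set x₁ : ℤ := t₁ * (k + 1)
  set P : ℕ := (t₂ - t₁) * (k + 1) with hP
  have hPk : (k : ℤ) < P := by
    have : 1 ≤ t₂ - t₁ := by omega
    rw [hP]; push_cast; nlinarith
  have hrep : ∀ j : ℤ, 0 ≤ j → j ≤ k → c (x₁ + P + j) = c (x₁ + j) := by
    intro j hj₀ hjk
    have := congrFun heq ⟨j.toNat, by omega⟩
    simp only [Int.toNat_of_nonneg hj₀] at this
    rw [this]; congr 1
    rw [hP, Nat.cast_mul, Nat.cast_sub hlt.le]; push_cast; ring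
  refine ⟨P, by omega, fun x => x₁ + (x - x₁) % P, fun x => ?_,
    fun x => ⟨x₁ + (x - x₁) % P, fun i hi => ?_⟩⟩
  · simp only [add_sub_right_comm, Int.add_emod_right]
  · have hm₀ : 0 ≤ (x - x₁) % P := Int.emod_nonneg _ (by omega)
    have hmP : (x - x₁) % P < P := Int.emod_lt_of_pos _ (by omega)
    simp only [add_sub_right_comm x, ← Int.emod_add_emod (x - x₁)]
    by_cases h : (x - x₁) % P + i < P
    · rw [Int.emod_eq_of_lt (by omega) h, add_assoc]
    · have hmod : ((x - x₁) % P + i) % P = (x - x₁) % P + i - P :=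
        ((Int.ediv_emod_unique (q := 1) (by omega)).2 ⟨by ring, by omega, by omega⟩).2
      rw [hmod, ← hrep _ (by omega) (by omega)]
      congr 1; ring

theorem exists_periodic_reindex_strip {T : Finset WangTile} {f : ℤ × ℤ → WangTile}
    (hmem : ∀ p, f p ∈ T) (b A : ℕ) :
    ∃ P : ℕ, 0 < P ∧ ∃ σ : ℤ → ℤ, Function.Periodic σ P ∧ ∀ z, ∃ u, ∀ d : ℤ, -A ≤ d → d ≤ A + 1 →
      ∀ j : ℤ, 0 ≤ j → j < b → f (σ (z + d), j) = f (u + d, j) := by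
  obtain ⟨P, hP, σ, hσ, hloc⟩ :=
    exists_periodic_reindex (fun x (j : Fin b) => (⟨f (x, j), hmem _⟩ : T)) (2 * A + 2)
  refine ⟨P, hP, σ, hσ, fun z => ?_⟩
  obtain ⟨w, hw⟩ := hloc (z - A)
  refine ⟨w + A, fun d hd₁ hd₂ j hj₀ hjb => ?_⟩
  have := congrArg Subtype.val (congrFun (hw (d + A).toNat (by omega)) ⟨j.toNat, by omega⟩)
  simp only [Int.toNat_of_nonneg hj₀, Int.toNat_of_nonneg (by omega : 0 ≤ d + A)] at this
  rwa [show z + d = z - A + (d + A) by ring, show w + A + d = w + (d + A) by ring]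

theorem IsWangTiling.exists_horizontal_period {T : Finset WangTile} {f : ℤ × ℤ → WangTile}
    (hf : IsWangTiling T f) {a : ℤ} {b : ℕ} (hb : 0 < b) (hv : (a, (b : ℤ)) ∈ periods f) :
    ∃ g, IsWangTiling T g ∧ ∃ P : ℕ, 0 < P ∧ ((P : ℤ), (0 : ℤ)) ∈ periods g ∧
      (a, (b : ℤ)) ∈ periods g := by
  obtain ⟨hmem, hew, hns⟩ := hf
  obtain ⟨P, hP, σ, hσ, hstrip⟩ := exists_periodic_reindex_strip hmem b a.natAbs
  have hdiv : ∀ y q r : ℤ, r + b * q = y → 0 ≤ r → r < b → y / b = q ∧ y % b = r :=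
    fun y q r h h₀ h₁ => (Int.ediv_emod_unique (by omega)).2 ⟨h, h₀, h₁⟩
  have hr₀ : ∀ y : ℤ, 0 ≤ y % b := fun y => Int.emod_nonneg _ (by omega)
  have hrb : ∀ y : ℤ, y % b < b := fun y => Int.emod_lt_of_pos _ (by omega)
  have hy : ∀ y : ℤ, y % b + b * (y / b) = y := fun y => Int.emod_add_mul_ediv y b
  refine ⟨fun p => f (σ (p.1 - p.2 / b * a), p.2 % b),
    ⟨fun p => hmem _, fun x y => ?_, fun x y => ?_⟩, P, hP, fun p => ?_, fun p => ?_⟩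
  · obtain ⟨u, hu⟩ := hstrip (x - y / b * a)
    have h₀ := hu 0 (by omega) (by omega) _ (hr₀ y) (hrb y)
    have h₁ := hu 1 (by omega) (by omega) _ (hr₀ y) (hrb y)
    simp only [add_zero] at h₀
    simp only [show x + 1 - y / b * a = x - y / b * a + 1 by ring, h₀, h₁]
    exact hew _ _
  · dsimp only
    obtain ⟨u, hu⟩ := hstrip (x - y / b * a)
    have h₀ := hu 0 (by omega) (by omega) _ (hr₀ y) (hrb y)
    simp only [add_zero] at h₀
    rw [h₀]
    by_cases hj : y % b + 1 < b
    · obtain ⟨hq, hr⟩ :=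
        hdiv (y + 1) (y / b) (y % b + 1) (by linarith [hy y]) (by linarith [hr₀ y]) hj
      have h₁ := hu 0 (by omega) (by omega) _ (by linarith [hr₀ y]) hj
      simp only [add_zero] at h₁
      simp only [hq, hr, h₁]
      exact hns _ _
    · -- crossing the top of the strip: use the period `(a, b)` of `f`
      obtain ⟨hq, hr⟩ := hdiv (y + 1) (y / b + 1) 0 (by linarith [hy y, hrb y]) le_rfl (by omega)
      have h₁ := hu (-a) (by omega) (by omega) 0 le_rfl (by omega)
      have := hrb y
      rw [hq, hr, show x - (y / b + 1) * a = x - y / b * a + -a by ring, h₁, hns,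
        show y % b + 1 = b by omega, ← hv (u + -a, 0)]
      congr 1; ext <;> simp
  · simp only [Prod.fst_add, Prod.snd_add, add_zero, add_sub_right_comm, hσ _]
  · obtain ⟨hq, hr⟩ := hdiv (p.2 + b) (p.2 / b + 1) (p.2 % b) (by linarith [hy p.2]) (hr₀ _) (hrb _)
    simp only [Prod.fst_add, Prod.snd_add, hq, hr]
    ring_nf

/-- Reflection in the diagonal: north ↔ east, south ↔ west. -/
def WangTile.transpose (t : WangTile) : WangTile := (t.east, t.west, t.north, t.south)

@[simp] theorem WangTile.transpose_transpose (t : WangTile) : t.transpose.transpose = t := rfl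
@[simp] theorem WangTile.north_transpose (t : WangTile) : t.transpose.north = t.east := rfl
@[simp] theorem WangTile.south_transpose (t : WangTile) : t.transpose.south = t.west := rfl
@[simp] theorem WangTile.east_transpose (t : WangTile) : t.transpose.east = t.north := rfl
@[simp] theorem WangTile.west_transpose (t : WangTile) : t.transpose.west = t.south := rfl

def transposeConfig (f : ℤ × ℤ → WangTile) : ℤ × ℤ → WangTile := fun p => (f p.swap).transpose

theorem IsWangTiling.transposeConfig {T : Finset WangTile} {f : ℤ × ℤ → WangTile}
    (hf : IsWangTiling T f) :
    IsWangTiling (T.image WangTile.transpose) (transposeConfig f) :=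
  ⟨fun p => Finset.mem_image_of_mem _ (hf.1 p.swap),
    fun x y => by simpa [_root_.transposeConfig] using hf.2.2 y x,
    fun x y => by simpa [_root_.transposeConfig] using hf.2.1 y x⟩

theorem swap_mem_periods_transposeConfig {f : ℤ × ℤ → WangTile} {v : ℤ × ℤ}
    (hv : v ∈ periods f) : v.swap ∈ periods (transposeConfig f) := fun p => by
  simp only [_root_.transposeConfig, Prod.swap_add, Prod.swap_swap, hv p.swap]

theorem HasSquarePeriod.transposeConfig {f : ℤ × ℤ → WangTile} {n : ℕ}
    (hf : HasSquarePeriod f n) : HasSquarePeriod (transposeConfig f) n :=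
  ⟨swap_mem_periods_transposeConfig hf.2, swap_mem_periods_transposeConfig hf.1⟩

theorem exists_hasSquarePeriod_of_snd_ne_zero {T : Finset WangTile} {f : ℤ × ℤ → WangTile}
    (hf : IsWangTiling T f) {v : ℤ × ℤ} (hv : v ∈ periods f) (hv₂ : v.2 ≠ 0) :
    ∃ n : ℕ, 0 < n ∧ ∃ g, IsWangTiling T g ∧ HasSquarePeriod g n := by
  obtain ⟨a, b, hb, hab⟩ : ∃ (a : ℤ) (b : ℕ), 0 < b ∧ (a, (b : ℤ)) ∈ periods f := by
    rcases hv₂.lt_or_gt with h | h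
    · exact ⟨-v.1, (-v.2).toNat, by omega, by
        convert neg_mem hv using 1; ext <;> simp; omega⟩
    · exact ⟨v.1, v.2.toNat, by omega, by convert hv using 1; ext <;> simp; omega⟩
  obtain ⟨g, hg, P, hP, hP₀, hgab⟩ := hf.exists_horizontal_period hb hab
  exact ⟨P * b, Nat.mul_pos hP hb, g, hg, hasSquarePeriod_of_mem_periods hP₀ hgab⟩

theorem WangTilesPeriodically.exists_hasSquarePeriod {T : Finset WangTile}
    (hT : WangTilesPeriodically T) :
    ∃ n : ℕ, 0 < n ∧ ∃ g, IsWangTiling T g ∧ HasSquarePeriod g n := by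
  obtain ⟨f, hf, v, hv₀, hv⟩ := hT
  by_cases hv₂ : v.2 = 0
  · -- a horizontal period becomes a vertical one after transposing
    have hv₁ : v.swap.2 ≠ 0 := fun h => hv₀ (Prod.ext h hv₂)
    obtain ⟨n, hn, g, hg, hgn⟩ :=
      exists_hasSquarePeriod_of_snd_ne_zero hf.transposeConfig
        (swap_mem_periods_transposeConfig hv) hv₁
    refine ⟨n, hn, transposeConfig g, ?_, hgn.transposeConfig⟩
    simpa [Finset.image_image, Function.comp_def] using hg.transposeConfig
  · exact exists_hasSquarePeriod_of_snd_ne_zero hf hv hv₂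

def IsWangTilingOn (T : Finset WangTile) (f : ℤ × ℤ → WangTile) (S : Set (ℤ × ℤ)) : Prop :=
  (∀ p ∈ S, f p ∈ T) ∧
  (∀ x y : ℤ, (x, y) ∈ S → (x + 1, y) ∈ S → (f (x, y)).east = (f (x + 1, y)).west) ∧
  (∀ x y : ℤ, (x, y) ∈ S → (x, y + 1) ∈ S → (f (x, y)).north = (f (x, y + 1)).south)

section IsWangTilingOn

variable {T : Finset WangTile} {f g : ℤ × ℤ → WangTile} {S S' : Set (ℤ × ℤ)}

theorem IsWangTilingOn.mono (hf : IsWangTilingOn T f S') (h : S ⊆ S') : IsWangTilingOn T f S :=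
  ⟨fun p hp => hf.1 p (h hp), fun x y h₁ h₂ => hf.2.1 x y (h h₁) (h h₂),
    fun x y h₁ h₂ => hf.2.2 x y (h h₁) (h h₂)⟩

theorem IsWangTilingOn.congr (hf : IsWangTilingOn T f S) (hfg : ∀ p ∈ S, f p = g p) :
    IsWangTilingOn T g S :=
  ⟨fun p hp => hfg p hp ▸ hf.1 p hp,
    fun x y h₁ h₂ => hfg _ h₁ ▸ hfg _ h₂ ▸ hf.2.1 x y h₁ h₂,
    fun x y h₁ h₂ => hfg _ h₁ ▸ hfg _ h₂ ▸ hf.2.2 x y h₁ h₂⟩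

theorem isClosed_setOf_isWangTilingOn (S : Set (ℤ × ℤ)) :
    IsClosed {G : ℤ × ℤ → T | IsWangTilingOn T (fun p => G p) S} := by
  have hrel : ∀ (p q : ℤ × ℤ) (R : T → T → Prop), IsClosed {G : ℤ × ℤ → T | R (G p) (G q)} :=
    fun p q R => (isClosed_discrete {r : T × T | R r.1 r.2}).preimage
      (f := fun G : ℤ × ℤ → T => (G p, G q)) (by fun_prop)
  simp only [IsWangTilingOn, Set.ofPred_and, Set.ofPred_forall]
  refine (isClosed_biInter fun p _ => hrel p p fun u _ => (u : WangTile) ∈ T).inter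
    ((isClosed_iInter fun x => isClosed_iInter fun y => isClosed_iInter fun _ =>
      isClosed_iInter fun _ => hrel (x, y) (x + 1, y) fun u v =>
        (u : WangTile).east = (v : WangTile).west).inter
    (isClosed_iInter fun x => isClosed_iInter fun y => isClosed_iInter fun _ =>
      isClosed_iInter fun _ => hrel (x, y) (x, y + 1) fun u v =>
        (u : WangTile).north = (v : WangTile).south))

theorem wangTiles_of_forall_isWangTilingOn {S : ℕ → Set (ℤ × ℤ)} (hS : Monotone S)
    (hcover : ∀ p, ∃ N, p ∈ S N) (h : ∀ N, ∃ f, IsWangTilingOn T f (S N)) : WangTiles T := by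
  classical
  choose f hf using h
  obtain ⟨N₀, hN₀⟩ := hcover 0
  let t₀ : T := ⟨_, (hf N₀).1 0 hN₀⟩
  let C : ℕ → Set (ℤ × ℤ → T) := fun N => {G | IsWangTilingOn T (fun p => G p) (S N)}
  have hC : ∀ N, (C N).Nonempty := fun N =>
    ⟨fun p => if hp : f N p ∈ T then ⟨_, hp⟩ else t₀,
      (hf N).congr fun p hp => by simp [(hf N).1 p hp]⟩
  obtain ⟨G, hG⟩ := IsCompact.nonempty_iInter_of_sequence_nonempty_isCompact_isClosed C
    (fun N _ hG => hG.mono (hS N.le_succ)) hC (isClosed_setOf_isWangTilingOn _).isCompact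
    fun N => isClosed_setOf_isWangTilingOn _
  rw [Set.mem_iInter] at hG
  have hpair : ∀ p q, ∃ N, p ∈ S N ∧ q ∈ S N := fun p q => by
    obtain ⟨N₁, h₁⟩ := hcover p
    obtain ⟨N₂, h₂⟩ := hcover q
    exact ⟨max N₁ N₂, hS (le_max_left _ _) h₁, hS (le_max_right _ _) h₂⟩
  refine ⟨fun p => G p, fun p => (G p).2, fun x y => ?_, fun x y => ?_⟩
  · obtain ⟨N, h₁, h₂⟩ := hpair (x, y) (x + 1, y)
    exact (hG N).2.1 x y h₁ h₂
  · obtain ⟨N, h₁, h₂⟩ := hpair (x, y) (x, y + 1)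
    exact (hG N).2.2 x y h₁ h₂

end IsWangTilingOn

def List.tuples {α : Type*} (l : List α) : ℕ → List (List α)
  | 0 => [[]]
  | k + 1 => (l.tuples k).flatMap fun s => l.map (· :: s)

theorem List.mem_tuples {α : Type*} {l s : List α} {k : ℕ} :
    s ∈ l.tuples k ↔ s.length = k ∧ ∀ a ∈ s, a ∈ l := by
  induction k generalizing s with
  | zero => simp +contextual [List.tuples, List.length_eq_zero_iff]
  | succ k ih =>
    cases s with
    | nil => simp [List.tuples]
    | cons a s => simp [List.tuples, ih, and_comm, and_left_comm]

/-- An enumeration of `s` that is primitive recursive in the `Denumerable` encoding of `Finset α`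
(unlike `Finset.toList`). -/
def Finset.denumList {α : Type*} [Denumerable α] (s : Finset α) : List α :=
  (Denumerable.raise' (Denumerable.ofNat (List ℕ) (Denumerable.eqv (Finset α) s)) 0).map
    (Denumerable.ofNat α)

theorem Finset.mem_denumList {α : Type*} [Denumerable α] {s : Finset α} {a : α} :
    a ∈ s.denumList ↔ a ∈ s := by
  have h : Denumerable.ofNat (Finset α) (Denumerable.eqv (Finset α) s) =
      (Denumerable.raise'Finset (Denumerable.ofNat (List ℕ) (Denumerable.eqv (Finset α) s)) 0).map
        (Denumerable.eqv α).symm.toEmbedding :=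
    Denumerable.ofNat_of_decode rfl
  rw [show Denumerable.ofNat (Finset α) (Denumerable.eqv (Finset α) s) = s from
    (Denumerable.eqv (Finset α)).symm_apply_apply s] at h
  conv_rhs => rw [h]
  simp only [Finset.denumList, List.mem_map, Finset.mem_map, Denumerable.raise'Finset]
  rfl

def EdgesMatchOnSquare (n : ℕ) (c : ℕ → ℕ → WangTile) : Prop :=
  (∀ i < n - 1, ∀ j < n, (c i j).east = (c (i + 1) j).west) ∧
  (∀ i < n, ∀ j < n - 1, (c i j).north = (c i (j + 1)).south)

theorem IsWangTiling.edgesMatchOnSquare {T : Finset WangTile} {f : ℤ × ℤ → WangTile}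
    (hf : IsWangTiling T f) {n : ℕ} {c : ℕ → ℕ → WangTile}
    (hc : ∀ i < n, ∀ j < n, c i j = f (i, j)) : EdgesMatchOnSquare n c :=
  ⟨fun i hi j hj => by
    rw [hc i (by omega) j hj, hc (i + 1) (by omega) j hj, Nat.cast_succ]; exact hf.2.1 _ _,
  fun i hi j hj => by
    rw [hc i hi j (by omega), hc i hi (j + 1) (by omega), Nat.cast_succ]; exact hf.2.2 _ _⟩

theorem EdgesMatchOnSquare.isWangTilingOn {T : Finset WangTile} {n : ℕ}
    {c : ℕ → ℕ → WangTile} (hc : EdgesMatchOnSquare n c) (hT : ∀ i < n, ∀ j < n, c i j ∈ T)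
    (o : ℤ) :
    IsWangTilingOn T (fun p => c (p.1 - o).toNat (p.2 - o).toNat)
      (Set.Ico o (o + n) ×ˢ Set.Ico o (o + n)) := by
  refine ⟨fun p hp => ?_, fun x y hxy hxy' => ?_, fun x y hxy hxy' => ?_⟩ <;>
    simp only [Set.mem_prod, Set.mem_Ico] at *
  · exact hT _ (by omega) _ (by omega)
  · rw [show (x + 1 - o).toNat = (x - o).toNat + 1 by omega]
    exact hc.1 _ (by omega) _ (by omega)
  · rw [show (y + 1 - o).toNat = (y - o).toNat + 1 by omega]
    exact hc.2 _ (by omega) _ (by omega)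

theorem HasSquarePeriod.isWangTiling {T : Finset WangTile} {f : ℤ × ℤ → WangTile} {n : ℕ}
    (hper : HasSquarePeriod f n) (hn : 0 < n)
    (hf : IsWangTilingOn T f (Set.Ico 0 (n + 1 : ℤ) ×ˢ Set.Ico 0 (n + 1 : ℤ))) :
    IsWangTiling T f := by
  have hB : ∀ x y : ℤ, 0 ≤ x → x ≤ n → 0 ≤ y → y ≤ n →
      (x, y) ∈ Set.Ico 0 (n + 1 : ℤ) ×ˢ Set.Ico 0 (n + 1 : ℤ) := by
    intros; simp only [Set.mem_prod, Set.mem_Ico]; omega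
  have h₀ : ∀ x : ℤ, 0 ≤ x % n := fun x => Int.emod_nonneg _ (by omega)
  have h₁ : ∀ x : ℤ, x % n < n := fun x => Int.emod_lt_of_pos _ (by omega)
  have hred := hper.apply_add_emod
  have e₀ : ∀ x y : ℤ, f (x, y) = f (x % n, y % n) := fun x y => by simpa using hred x y 0 0
  have e₁ : ∀ x y : ℤ, f (x + 1, y) = f (x % n + 1, y % n) := fun x y => by
    simpa using hred x y 1 0
  have e₂ : ∀ x y : ℤ, f (x, y + 1) = f (x % n, y % n + 1) := fun x y => by
    simpa using hred x y 0 1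
  refine ⟨fun p => ?_, fun x y => ?_, fun x y => ?_⟩
  · rw [e₀]
    exact hf.1 _ (hB _ _ (h₀ _) (h₁ _).le (h₀ _) (h₁ _).le)
  · rw [e₀, e₁]
    exact hf.2.1 _ _ (hB _ _ (h₀ _) (h₁ _).le (h₀ _) (h₁ _).le)
      (hB _ _ (by linarith [h₀ x]) (by linarith [h₁ x]) (h₀ _) (h₁ _).le)
  · rw [e₀, e₂]
    exact hf.2.2 _ _ (hB _ _ (h₀ _) (h₁ _).le (h₀ _) (h₁ _).le)
      (hB _ _ (h₀ _) (h₁ _).le (by linarith [h₀ y]) (by linarith [h₁ y]))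

/-- Cell `(i, j)` of an `n × n` square stored row by row in the list `s`. -/
def squareCell (n : ℕ) (s : List WangTile) (i j : ℕ) : WangTile := s.getD (i + n * j) default

def squareCode (f : ℤ × ℤ → WangTile) (n : ℕ) : List WangTile :=
  (List.range (n * n)).map fun m => f ((m % n : ℕ), (m / n : ℕ))

section Codes

variable {T : Finset WangTile} {n : ℕ} {i j : ℕ}

theorem index_lt_mul_self (hi : i < n) (hj : j < n) : i + n * j < n * n := by
  nlinarith

theorem squareCell_squareCode (f : ℤ × ℤ → WangTile) (hi : i < n) (hj : j < n) :
    squareCell n (squareCode f n) i j = f (i, j) := by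
  have hn : 0 < n := by omega
  rw [squareCell, squareCode, List.getD_eq_getElem?_getD, List.getElem?_map,
    List.getElem?_range (index_lt_mul_self hi hj), Option.map_some, Option.getD_some,
    Nat.add_mul_mod_self_left, Nat.mod_eq_of_lt hi, Nat.add_mul_div_left _ _ hn,
    Nat.div_eq_of_lt hi, zero_add]

theorem squareCode_mem_tuples {f : ℤ × ℤ → WangTile} (hf : ∀ p, f p ∈ T) :
    squareCode f n ∈ T.denumList.tuples (n * n) :=
  List.mem_tuples.2 ⟨by simp [squareCode], by simp [squareCode, Finset.mem_denumList, hf]⟩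

theorem squareCell_mem {s : List WangTile} (hs : s ∈ T.denumList.tuples (n * n)) (hi : i < n)
    (hj : j < n) : squareCell n s i j ∈ T := by
  obtain ⟨hlen, hmem⟩ := List.mem_tuples.1 hs
  have hlt : i + n * j < s.length := hlen ▸ index_lt_mul_self hi hj
  rw [squareCell, List.getD_eq_getElem _ _ hlt]
  exact Finset.mem_denumList.1 (hmem _ (List.getElem_mem hlt))

end Codes

def TilesSquare (T : Finset WangTile) (n : ℕ) : Prop :=
  ∃ s ∈ T.denumList.tuples (n * n), EdgesMatchOnSquare n (squareCell n s)

/-- The `(n + 1) × (n + 1)` square of the doubly `n`-periodic extension of an `n × n` square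
contains every pair of cells that are adjacent on the torus. -/
def TilesTorus (T : Finset WangTile) (n : ℕ) : Prop :=
  0 < n ∧ ∃ s ∈ T.denumList.tuples (n * n),
    EdgesMatchOnSquare (n + 1) fun i j => squareCell n s (i % n) (j % n)

theorem WangTiles.tilesSquare {T : Finset WangTile} (hT : WangTiles T) (n : ℕ) :
    TilesSquare T n := by
  obtain ⟨f, hf⟩ := hT
  exact ⟨squareCode f n, squareCode_mem_tuples hf.1,
    hf.edgesMatchOnSquare fun i hi j hj => squareCell_squareCode f hi hj⟩

theorem wangTiles_iff_forall_tilesSquare {T : Finset WangTile} :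
    WangTiles T ↔ ∀ n, TilesSquare T n := by
  refine ⟨WangTiles.tilesSquare, fun h => ?_⟩
  refine wangTiles_of_forall_isWangTilingOn (S := fun N : ℕ =>
      Set.Ico (-N : ℤ) N ×ˢ Set.Ico (-N : ℤ) N) (fun N M hNM => ?_) (fun p => ?_) (fun N => ?_)
  · have : Set.Ico (-N : ℤ) N ⊆ Set.Ico (-M : ℤ) M := Set.Ico_subset_Ico (by omega) (by omega)
    exact Set.prod_mono this this
  · exact ⟨p.1.natAbs + p.2.natAbs + 1, by simp only [Set.mem_prod, Set.mem_Ico]; omega⟩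
  · obtain ⟨s, hs, hc⟩ := h (2 * N)
    have := hc.isWangTilingOn (fun i hi j hj => squareCell_mem hs hi hj) (-N)
    rw [show (-N : ℤ) + (2 * N : ℕ) = N by push_cast; ring] at this
    exact ⟨_, this⟩

theorem TilesTorus.wangTiles {T : Finset WangTile} {n : ℕ} (hT : TilesTorus T n) :
    WangTiles T := by
  obtain ⟨hn, s, hs, hc⟩ := hT
  have hon := hc.isWangTilingOn
    (fun i _ j _ => squareCell_mem hs (Nat.mod_lt i hn) (Nat.mod_lt j hn)) 0
  simp only [sub_zero, zero_add, Nat.cast_add, Nat.cast_one] at hon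
  refine ⟨fun p => squareCell n s (p.1 % n).toNat (p.2 % n).toNat,
    HasSquarePeriod.isWangTiling ⟨fun p => ?_, fun p => ?_⟩ hn (hon.congr fun p hp => ?_)⟩
  · simp [Int.add_emod_right]
  · simp [Int.add_emod_right]
  · simp only [Set.mem_prod, Set.mem_Ico] at hp
    simp [Int.toNat_emod hp.1.1, Int.toNat_emod hp.2.1]

theorem IsWangTiling.tilesTorus {T : Finset WangTile} {f : ℤ × ℤ → WangTile}
    (hf : IsWangTiling T f) {n : ℕ} (hn : 0 < n) (hper : HasSquarePeriod f n) :
    TilesTorus T n := by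
  refine ⟨hn, squareCode f n, squareCode_mem_tuples hf.1, hf.edgesMatchOnSquare fun i _ j _ => ?_⟩
  rw [squareCell_squareCode f (Nat.mod_lt i hn) (Nat.mod_lt j hn)]
  simpa using (hper.apply_add_emod i j 0 0).symm

theorem Denumerable.raise'_eq_foldl (l : List ℕ) (n : ℕ) (acc : List ℕ) :
    (l.foldl (fun q m => (m + q.1 + 1, q.2 ++ [m + q.1])) (n, acc)).2 =
      acc ++ Denumerable.raise' l n := by
  induction l generalizing n acc with
  | nil => simp [Denumerable.raise']
  | cons m l ih => simp [Denumerable.raise', ih, Nat.add_comm m n]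

namespace Primrec

theorem list_tuples {β : Type*} [Primcodable β] : Primrec₂ (@List.tuples β) := by
  have hstep : Primrec₂ fun (l : List β) (q : ℕ × List (List β)) =>
      q.2.flatMap fun s => l.map (· :: s) :=
    list_flatMap (snd.comp snd)
      (list_map (fst.comp fst) (list_cons.comp snd (snd.comp fst)).to₂).to₂
  refine (nat_rec (const [[]]) hstep).of_eq fun l k => ?_
  induction k with
  | zero => rfl
  | succ k ih => simp only [List.tuples, ← ih]

theorem finset_denumList {α : Type*} [Denumerable α] :
    Primrec (Finset.denumList : Finset α → List α) := by
  have hstep : Primrec₂ fun (_ : List ℕ) (q : (ℕ × List ℕ) × ℕ) =>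
      (q.2 + q.1.1 + 1, q.1.2 ++ [q.2 + q.1.1]) :=
    (succ.comp (nat_add.comp (snd.comp snd) (fst.comp (fst.comp snd)))).pair
      (list_concat.comp (snd.comp (fst.comp snd))
        (nat_add.comp (snd.comp snd) (fst.comp (fst.comp snd))))
  have hraise : Primrec fun l : List ℕ => Denumerable.raise' l 0 :=
    (snd.comp (list_foldl Primrec.id (const ((0 : ℕ), ([] : List ℕ))) hstep)).of_eq
      fun l => by simp [Denumerable.raise'_eq_foldl]
  exact list_map (hraise.comp ((Primrec.ofNat (List ℕ)).comp Primrec.encode))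
    ((Primrec.ofNat α).comp snd).to₂

theorem squareCell {α : Type*} [Primcodable α] {n : α → ℕ} {s : α → List WangTile}
    {i j : α → ℕ} (hn : Primrec n) (hs : Primrec s) (hi : Primrec i) (hj : Primrec j) :
    Primrec fun a => _root_.squareCell (n a) (s a) (i a) (j a) :=
  (list_getD default).comp hs (nat_add.comp hi (nat_mul.comp hn hj))

end Primrec

section Computability

variable {α : Type*} [Primcodable α]

open Primrec

theorem PrimrecPred.forall_lt_forall_lt {p : α → ℕ → ℕ → Prop} {m₁ m₂ : α → ℕ}
    (hm₁ : Primrec m₁) (hm₂ : Primrec m₂)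
    (hp : PrimrecPred fun x : α × ℕ × ℕ => p x.1 x.2.1 x.2.2) :
    PrimrecPred fun a => ∀ i < m₁ a, ∀ j < m₂ a, p a i j := by
  have hinner : PrimrecRel fun (j : ℕ) (x : α × ℕ) => p x.1 x.2 j :=
    hp.comp ((fst.comp snd).pair ((snd.comp snd).pair fst))
  have houter : PrimrecRel fun (i : ℕ) (a : α) => ∀ j ∈ List.range (m₂ a), p a i j :=
    hinner.forall_mem_list.comp (list_range.comp (hm₂.comp snd)) (snd.pair fst)
  exact (houter.forall_mem_list.comp (list_range.comp hm₁) Primrec.id).of_eq fun a => by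
    simp only [List.mem_range, id]

theorem primrecPred_edgesMatchOnSquare {m : α → ℕ} {c : α → ℕ → ℕ → WangTile}
    (hm : Primrec m) (hc : Primrec fun x : α × ℕ × ℕ => c x.1 x.2.1 x.2.2) :
    PrimrecPred fun a => EdgesMatchOnSquare (m a) (c a) := by
  have hnorth : Primrec WangTile.north := fst
  have hsouth : Primrec WangTile.south := fst.comp snd
  have heast : Primrec WangTile.east := fst.comp (snd.comp snd)
  have hwest : Primrec WangTile.west := snd.comp (snd.comp snd)
  have hright : Primrec fun x : α × ℕ × ℕ => c x.1 (x.2.1 + 1) x.2.2 :=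
    hc.comp (fst.pair ((succ.comp (fst.comp snd)).pair (snd.comp snd)))
  have hup : Primrec fun x : α × ℕ × ℕ => c x.1 x.2.1 (x.2.2 + 1) :=
    hc.comp (fst.pair ((fst.comp snd).pair (succ.comp (snd.comp snd))))
  have hm' : Primrec fun a => m a - 1 := nat_sub.comp hm (const 1)
  exact (PrimrecPred.forall_lt_forall_lt hm' hm
      (Primrec.eq.comp (heast.comp hc) (hwest.comp hright))).and
    (PrimrecPred.forall_lt_forall_lt hm hm' (Primrec.eq.comp (hnorth.comp hc) (hsouth.comp hup)))

theorem PrimrecRel.rePred_exists {R : α → ℕ → Prop} (hR : PrimrecRel R) :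
    REPred fun a => ∃ n, R a n := by
  classical
  have : Partrec fun a => Nat.rfind fun n => Part.some (decide (R a n)) :=
    Partrec.rfind hR.decide.to_comp.partrec
  exact (Partrec.dom_re this).of_eq fun a => Nat.rfind_dom.trans (by simp)

theorem primrecRel_tilesSquare : PrimrecRel TilesSquare := by
  have hR : PrimrecRel fun (s : List WangTile) (x : Finset WangTile × ℕ) =>
      EdgesMatchOnSquare x.2 (squareCell x.2 s) :=
    primrecPred_edgesMatchOnSquare (snd.comp snd)
      (Primrec.squareCell (snd.comp (snd.comp fst))
        (fst.comp fst) (fst.comp snd)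
        (snd.comp snd))
  exact hR.exists_mem_list.comp (list_tuples.comp
    (finset_denumList.comp fst) (nat_mul.comp snd snd))
    Primrec.id

theorem primrecRel_tilesTorus : PrimrecRel TilesTorus := by
  have hR : PrimrecRel fun (s : List WangTile) (x : Finset WangTile × ℕ) =>
      EdgesMatchOnSquare (x.2 + 1) fun i j => squareCell x.2 s (i % x.2) (j % x.2) := by
    have hn : Primrec fun y : (List WangTile × Finset WangTile × ℕ) × ℕ × ℕ => y.1.2.2 :=
      snd.comp (snd.comp fst)
    exact primrecPred_edgesMatchOnSquare (Primrec.succ.comp (snd.comp snd))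
      (Primrec.squareCell hn (fst.comp fst)
        (nat_mod.comp (fst.comp snd) hn)
        (nat_mod.comp (snd.comp snd) hn))
  exact (nat_lt.comp (const 0) snd).and
    (hR.exists_mem_list.comp (list_tuples.comp
      (finset_denumList.comp fst) (nat_mul.comp snd snd))
      Primrec.id)

end Computability

/-- **If there are no aperiodic tile sets, the Tiling Problem is decidable.**
If every Wang tile set that admits a tiling of the plane also admits a periodic
tiling, then the Tiling Problem (does a given tile set tile the plane?) is
decidable: enumerate configurations on larger and larger squares until either no
configuration extends (answer No) or a fundamental domain is found (answer Yes).
Contrapositively, undecidability of the Tiling Problem implies the existence of an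
aperiodic set of tiles. -/
theorem tilingProblem_decidable_of_no_aperiodic_set
    (h : ∀ T : Finset WangTile, WangTiles T → WangTilesPeriodically T) :
    ComputablePred WangTiles := by
  have hyes : ∀ T, (∃ n, TilesTorus T n) ↔ WangTiles T := fun T => by
    refine ⟨fun ⟨n, hn⟩ => hn.wangTiles, fun hT => ?_⟩
    obtain ⟨n, hn, g, hg, hper⟩ := (h T hT).exists_hasSquarePeriod
    exact ⟨n, hg.tilesTorus hn hper⟩
  have hno : ∀ T, (∃ n, ¬TilesSquare T n) ↔ ¬WangTiles T := fun T => by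
    rw [wangTiles_iff_forall_tilesSquare, not_forall]
  exact ComputablePred.computable_iff_re_compl_re'.2
    ⟨primrecRel_tilesTorus.rePred_exists.of_eq hyes,
      primrecRel_tilesSquare.not.rePred_exists.of_eq hno⟩
end

section
/- If a Wang tile set admits a tiling f : ℤ² → T that is invariant under translation by some nonzero vector v ∈ ℤ², then it admits a tiling invariant under two linearly independent translations (i.e., a fully periodic tiling). -/
lemma wang_core (T : Finset WangTile) (f : ℤ × ℤ → WangTile)
    (hf : IsWangTiling T f) (p q : ℤ) (hq : 0 < q)
    (hper : ∀ x, f (x + (p, q)) = f x) :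
    ∃ g : ℤ × ℤ → WangTile, IsWangTiling T g ∧ ∃ d : ℤ, 0 < d ∧
      (∀ x, g (x + (d, 0)) = g x) ∧ (∀ x, g (x + (p, q)) = g x) := by
  obtain ⟨hmem, hhor, hver⟩ := hf
  set N : ℤ := (p.natAbs : ℤ) with hN
  -- pigeonhole on windows of columns
  have hqt : 0 < q.toNat := by omega
  let W : ℤ → Fin (2 * p.natAbs + 1) → Fin q.toNat → {t : WangTile // t ∈ T} :=
    fun x j i => ⟨f (x - N + (j : ℕ), ((i : ℕ) : ℤ)), hmem _⟩
  obtain ⟨x1, x2, hlt, hWeq⟩ : ∃ x1 x2, x1 < x2 ∧ W x1 = W x2 := by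
    obtain ⟨a, b, hab, h⟩ := Finite.exists_ne_map_eq_of_infinite W
    rcases hab.lt_or_gt with h' | h'
    · exact ⟨a, b, h', h⟩
    · exact ⟨b, a, h', h.symm⟩
  set d : ℤ := x2 - x1 with hdd
  have hd : 0 < d := by omega
  -- window equality in usable form
  have hW' : ∀ t y : ℤ, x1 - N ≤ t → t ≤ x1 + N → 0 ≤ y → y < q →
      f (t, y) = f (t + d, y) := by
    intro t y h1 h2 h3 h4
    have hj : (t - (x1 - N)).toNat < 2 * p.natAbs + 1 := by omega
    have hi : y.toNat < q.toNat := by omega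
    have h := congrFun (congrFun hWeq ⟨(t - (x1 - N)).toNat, hj⟩) ⟨y.toNat, hi⟩
    have h' := Subtype.ext_iff.mp h
    simp only [W, Fin.val_mk] at h'
    have e1 : (x1 - N + ((t - (x1 - N)).toNat : ℤ)) = t := by omega
    have e2 : (x2 - N + ((t - (x1 - N)).toNat : ℤ)) = t + d := by omega
    have e3 : ((y.toNat : ℤ)) = y := by omega
    rw [e1, e2, e3] at h'
    exact h'
  -- the reduction map into [x1, x1+d)
  set m : ℤ → ℤ := fun t => x1 + (t - x1) % d with hm
  have hm_lb : ∀ t, x1 ≤ m t := by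
    intro t
    have := Int.emod_nonneg (t - x1) hd.ne'
    simp only [hm]; omega
  have hm_ub : ∀ t, m t < x1 + d := by
    intro t
    have := Int.emod_lt_of_pos (t - x1) hd
    simp only [hm]; omega
  have hm_id : ∀ t, x1 ≤ t → t < x1 + d → m t = t := by
    intro t h1 h2
    simp only [hm]
    rw [Int.emod_eq_of_lt (by omega) (by omega)]
    omega
  have hm_add : ∀ t, m (t + d) = m t := by
    intro t
    simp only [hm]
    congr 1
    have : t + d - x1 = (t - x1) + d * 1 := by ring
    rw [this, Int.add_mul_emod_self_left]
  have hm_shift : ∀ a c : ℤ, m (m a + c) = m (a + c) := by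
    intro a c
    simp only [hm]
    congr 1
    have h1 : x1 + (a - x1) % d + c - x1 = (a - x1) % d + c := by ring
    have h2 : a + c - x1 = (a - x1) + c := by ring
    rw [h1, h2, Int.add_emod ((a - x1) % d) c, Int.emod_emod_of_dvd _ dvd_rfl,
      ← Int.add_emod]
  -- key claim: within the extended window, reduction does not change columns
  have key : ∀ n : ℕ, ∀ t y : ℤ, x1 - N ≤ t → t < x1 + d + N →
      (t < x1 → x1 - t ≤ n) → (x1 + d ≤ t → t - (x1 + d) < n) →
      0 ≤ y → y < q → f (m t, y) = f (t, y) := by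
    intro n
    induction n with
    | zero =>
      intro t y h1 h2 h3 h4 hy1 hy2
      rw [hm_id t (by omega) (by omega)]
    | succ n ih =>
      intro t y h1 h2 h3 h4 hy1 hy2
      rcases lt_or_ge t x1 with hc | hc
      · have e1 : f (t, y) = f (t + d, y) := hW' t y (by omega) (by omega) hy1 hy2
        rw [e1, ← hm_add t]
        exact ih (t + d) y (by omega) (by omega) (by omega) (by omega) hy1 hy2
      rcases lt_or_ge t (x1 + d) with hc2 | hc2
      · rw [hm_id t hc hc2]
      · have e1 : f (t - d, y) = f (t, y) := by
          have := hW' (t - d) y (by omega) (by omega) hy1 hy2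
          rw [this]; congr 2; omega
        have e2 : m (t - d) = m t := by
          rw [← hm_add (t - d)]; congr 1; omega
        rw [← e1, ← e2]
        exact ih (t - d) y (by omega) (by omega) (by omega) (by omega) hy1 hy2
  -- division helper
  have hdm : ∀ (y k r : ℤ), 0 ≤ r → r < q → y = k * q + r → y / q = k ∧ y % q = r := by
    intro y k r h1 h2 h3
    subst h3
    constructor
    · rw [add_comm, Int.add_mul_ediv_right _ _ hq.ne', Int.ediv_eq_zero_of_lt h1 h2,
        zero_add]
    · rw [add_comm, Int.add_mul_emod_self_right, Int.emod_eq_of_lt h1 h2]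
  -- the doubly periodic tiling
  refine ⟨fun z => f (m (z.1 - (z.2 / q) * p), z.2 % q), ⟨fun z => hmem _, ?_, ?_⟩, d, hd, ?_, ?_⟩
  · -- horizontal
    intro x y
    simp only []
    set k := y / q with hk
    set r := y % q with hr
    have hr1 : 0 ≤ r := Int.emod_nonneg y hq.ne'
    have hr2 : r < q := Int.emod_lt_of_pos y hq
    set t := x - k * p with ht
    have ht1 : x + 1 - k * p = t + 1 := by ring
    rw [ht1]
    have hmt1 : m (t + 1) = m (m t + 1) := (hm_shift t 1).symm
    rcases lt_or_ge (m t) (x1 + d - 1) with hc | hc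
    · rw [hmt1, hm_id (m t + 1) (by have := hm_lb t; omega) (by omega)]
      exact hhor (m t) r
    · have hc' : m t = x1 + d - 1 := by have := hm_ub t; omega
      have h2 : m (m t + 1) = x1 := by
        rw [hc']
        have : x1 + d - 1 + 1 = x1 + d := by ring
        rw [this]
        have : x1 + d = x1 + d := rfl
        calc m (x1 + d) = m x1 := hm_add x1
          _ = x1 := hm_id x1 (le_refl _) (by omega)
      rw [hmt1, h2, hc']
      have e1 : (f (x1 + d - 1, r)).east = (f (x1 + d, r)).west := by
        have := hhor (x1 + d - 1) r
        rwa [show x1 + d - 1 + 1 = x1 + d by ring] at this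
      rw [e1, ← hW' x1 r (by omega) (by omega) hr1 hr2]
  · -- vertical
    intro x y
    simp only []
    set k := y / q with hk
    set r := y % q with hr
    have hr1 : 0 ≤ r := Int.emod_nonneg y hq.ne'
    have hr2 : r < q := Int.emod_lt_of_pos y hq
    have hy : y = k * q + r := by rw [hk, hr, mul_comm]; exact (Int.mul_ediv_add_emod y q).symm
    rcases lt_or_ge r (q - 1) with hc | hc
    · obtain ⟨hdiv, hmod⟩ := hdm (y + 1) k (r + 1) (by omega) (by omega) (by omega)
      rw [hdiv, hmod]
      exact hver (m (x - k * p)) r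
    · have hc' : r = q - 1 := by omega
      obtain ⟨hdiv, hmod⟩ := hdm (y + 1) (k + 1) 0 (le_refl _) hq (by rw [hy, hc']; ring)
      rw [hdiv, hmod, hc']
      set t := x - k * p with ht
      have e1 : (f (m t, q - 1)).north = (f (m t, q)).south := by
        have := hver (m t) (q - 1)
        rwa [show q - 1 + 1 = q by ring] at this
      have e2 : f (m t, q) = f (m t - p, 0) := by
        have := hper (m t - p, 0)
        rw [Prod.mk_add_mk] at this
        rwa [show m t - p + p = m t by ring, zero_add] at this
      have e3 : f (m (m t - p), 0) = f (m t - p, 0) := by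
        have hz1 := hm_lb t
        have hz2 := hm_ub t
        exact key p.natAbs (m t - p) 0 (by omega) (by omega) (by omega) (by omega)
          (le_refl _) hq
      have e4 : m (m t - p) = m (x - (k + 1) * p) := by
        have := hm_shift t (-p)
        rw [show m t + -p = m t - p by ring, show t + -p = x - (k+1)*p by rw [ht]; ring] at this
        exact this
      rw [e1, e2, ← e3, e4]
  · -- period (d, 0)
    intro ⟨x, y⟩
    simp only [Prod.mk_add_mk, add_zero]
    have : x + d - (y / q) * p = (x - (y / q) * p) + d := by ring
    rw [this, hm_add]
  · -- period (p, q)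
    intro ⟨x, y⟩
    simp only [Prod.mk_add_mk]
    obtain ⟨hdiv, hmod⟩ := hdm (y + q) (y / q + 1) (y % q)
      (Int.emod_nonneg y hq.ne') (Int.emod_lt_of_pos y hq)
      (by linear_combination -Int.mul_ediv_add_emod y q)
    rw [hdiv, hmod]
    congr 2
    ring_nf

def wangTr (t : WangTile) : WangTile := (t.2.2.1, t.2.2.2, t.1, t.2.1)

lemma wangTr_tr (t : WangTile) : wangTr (wangTr t) = t := by
  obtain ⟨a, b, c, d⟩ := t; rfl

/-- **Weak periodicity yields full periodicity.** If a Wang tile set admits a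
tiling invariant under translation by some nonzero vector `v ∈ ℤ²`, then it admits
a tiling invariant under two linearly independent translations, i.e. a fully
periodic tiling. -/
theorem fully_periodic_of_weakly_periodic
    (T : Finset WangTile) (f : ℤ × ℤ → WangTile)
    (hf : IsWangTiling T f) (v : ℤ × ℤ) (hv : v ≠ 0)
    (hper : ∀ x, f (x + v) = f x) :
    ∃ g : ℤ × ℤ → WangTile, IsWangTiling T g ∧
      ∃ u w : ℤ × ℤ, (∀ a b : ℤ, a • u + b • w = 0 → a = 0 ∧ b = 0) ∧
        (∀ x, g (x + u) = g x) ∧ (∀ x, g (x + w) = g x) := by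
  obtain ⟨p, q⟩ := v
  -- from a period with positive second coordinate, conclude
  have main2 : ∀ p' q' : ℤ, 0 < q' → (∀ x, f (x + (p', q')) = f x) →
      ∃ g : ℤ × ℤ → WangTile, IsWangTiling T g ∧
      ∃ u w : ℤ × ℤ, (∀ a b : ℤ, a • u + b • w = 0 → a = 0 ∧ b = 0) ∧
        (∀ x, g (x + u) = g x) ∧ (∀ x, g (x + w) = g x) := by
    intro p' q' hq' hper'
    obtain ⟨g, hg, d, hd, h1, h2⟩ := wang_core T f hf p' q' hq' hper'
    refine ⟨g, hg, (d, 0), (p', q'), ?_, h1, h2⟩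
    intro a b hab
    rw [Prod.ext_iff] at hab
    simp only [Prod.fst_add, Prod.snd_add, Prod.smul_mk, smul_eq_mul, mul_zero,
      Prod.fst_zero, Prod.snd_zero, zero_add, add_zero] at hab
    have hb : b = 0 := by
      rcases mul_eq_zero.mp hab.2 with h | h
      · exact h
      · omega
    subst hb
    have ha : a = 0 := by
      rcases mul_eq_zero.mp (by omega : a * d = 0) with h | h
      · exact h
      · omega
    exact ⟨ha, rfl⟩
  by_cases hq : q = 0
  · -- horizontal period: transpose
    subst hq
    have hp : p ≠ 0 := fun h => hv (by rw [h]; rfl)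
    -- transposed tiling
    set T' : Finset WangTile := T.image wangTr with hT'
    set f' : ℤ × ℤ → WangTile := fun z => wangTr (f (z.2, z.1)) with hf'def
    have hf' : IsWangTiling T' f' := by
      refine ⟨fun z => Finset.mem_image_of_mem _ (hf.1 _), ?_, ?_⟩
      · intro x y
        exact hf.2.2 y x
      · intro x y
        exact hf.2.1 y x
    -- period for f'
    have hperabs : ∀ x, f (x + ((|p| : ℤ), 0)) = f x := by
      rcases abs_cases p with ⟨h, _⟩ | ⟨h, _⟩
      · rw [h]; exact hper
      · rw [h]
        intro x
        have := hper (x + (-p, 0))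
        rw [show x + (-p, 0) + (p, 0) = x by rw [add_assoc]; simp] at this
        exact this.symm
    have hper' : ∀ x, f' (x + (0, |p|)) = f' x := by
      intro ⟨a, b⟩
      simp only [hf'def, Prod.mk_add_mk, add_zero]
      rw [show ((b + |p|, a) : ℤ × ℤ) = (b, a) + (|p|, 0) by rw [Prod.mk_add_mk, add_zero]]
      rw [hperabs]
    obtain ⟨g', hg', d, hd, h1, h2⟩ := wang_core T' f' hf' 0 |p| (abs_pos.mpr hp) hper'
    set g : ℤ × ℤ → WangTile := fun z => wangTr (g' (z.2, z.1)) with hgdef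
    have hg : IsWangTiling T g := by
      refine ⟨?_, ?_, ?_⟩
      · intro z
        obtain ⟨t, ht, htt⟩ := Finset.mem_image.mp (hg'.1 (z.2, z.1))
        simp only [hgdef]
        rw [← htt, wangTr_tr]
        exact ht
      · intro x y
        exact hg'.2.2 y x
      · intro x y
        exact hg'.2.1 y x
    refine ⟨g, hg, (|p|, 0), (0, d), ?_, ?_, ?_⟩
    · intro a b hab
      rw [Prod.ext_iff] at hab
      simp only [Prod.fst_add, Prod.snd_add, Prod.smul_mk, smul_eq_mul, mul_zero,
        Prod.fst_zero, Prod.snd_zero, zero_add, add_zero] at hab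
      have hpa : |p| ≠ 0 := abs_ne_zero.mpr hp
      constructor
      · rcases mul_eq_zero.mp hab.1 with h | h
        · exact h
        · exact absurd h hpa
      · rcases mul_eq_zero.mp hab.2 with h | h
        · exact h
        · omega
    · intro ⟨a, b⟩
      simp only [hgdef, Prod.mk_add_mk, add_zero]
      have := h2 (b, a)
      rw [Prod.mk_add_mk, add_zero] at this
      rw [this]
    · intro ⟨a, b⟩
      simp only [hgdef, Prod.mk_add_mk, add_zero]
      have := h1 (b, a)
      rw [Prod.mk_add_mk, add_zero] at this
      rw [this]
  · -- q ≠ 0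
    rcases lt_or_gt_of_ne hq with hq' | hq'
    · -- use -v
      have hper' : ∀ x, f (x + (-p, -q)) = f x := by
        intro x
        have := hper (x + (-p, -q))
        rw [show x + (-p, -q) + (p, q) = x by
          rw [add_assoc, Prod.mk_add_mk]; simp] at this
        exact this.symm
      exact main2 (-p) (-q) (by omega) hper'
    · exact main2 p q hq' hper
end
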